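/- For every integer r ≥ 1, there exist polynomials p and q with real coefficients, each of degree 2r−2, such that q is obtained from p by the conjugation √5 ↦ −√5 (i.e., q = p̄ with α replaced by β in the coefficients), and for all integers n ≥ r, F_{n−r+2} · S(n, n−r+1) = p(n) · α^{n+2−r} + q(n) · β^{n+2−r}, where α = (1+√5)/2 and β = (1−√5)/2. -/

import Mathlib

/-- Stirling numbers of the second kind. -/
def stirling2 : ℕ → ℕ → ℕ
  | 0, 0 => 1
  | 0, _ + 1 => 0
  | _ + 1, 0 => 0
  | n + 1, k + 1 => stirling2 n k + (k + 1) * stirling2 n (k + 1)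

/-!
Along the `k`-th diagonal the recurrence of `S` reads
`S(n+1, n-k) = S(n, n-k-1) + (n-k)·S(n, n-k)`, so the forward difference of `n ↦ S(n, n-k-1)`
is `(n-k)·S(n, n-k)`. Summing polynomials (Faulhaber's formula via Bernoulli polynomials) raises
the degree by one, hence by induction `S(n, n-k)` agrees for `n ≥ k` with a rational polynomial of
degree `2k`. Binet's formula `F_m = (α^m - β^m)/√5` then gives the claim with `p = √5·P/5`
and `q = -p`, where `P` is the polynomial of the diagonal `k = r-1`.
-/

open Polynomial Finset

noncomputable def powerSumPoly (p : ℕ) : ℚ[X] :=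
  C (1 / (p + 1 : ℚ)) * (Polynomial.bernoulli (p + 1) - C (_root_.bernoulli (p + 1)))

theorem eval_powerSumPoly (p n : ℕ) :
    (powerSumPoly p).eval (n : ℚ) = ∑ k ∈ range n, (k : ℚ) ^ p := by
  rw [powerSumPoly, eval_mul, eval_sub, eval_C, eval_C, Polynomial.bernoulli_succ_eval]
  field_simp
  ring

theorem natDegree_powerSumPoly_le (p : ℕ) : (powerSumPoly p).natDegree ≤ p + 1 := by
  refine (natDegree_C_mul_le _ _).trans <| (natDegree_sub_le _ _).trans <| max_le ?_ (by simp)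
  refine natDegree_le_iff_coeff_eq_zero.mpr fun i hi => ?_
  rw [Polynomial.coeff_bernoulli, if_neg (by exact_mod_cast hi.not_ge)]

theorem coeff_powerSumPoly_succ (p : ℕ) : (powerSumPoly p).coeff (p + 1) = 1 / (p + 1) := by
  simp [powerSumPoly, Polynomial.coeff_bernoulli]

theorem exists_degree_eq_eval_eq_sum_range (f : ℚ[X]) :
    ∃ g : ℚ[X], g.degree = f.degree + 1 ∧
      ∀ n : ℕ, g.eval (n : ℚ) = ∑ m ∈ range n, f.eval (m : ℚ) := by
  obtain rfl | hf := eq_or_ne f 0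
  · exact ⟨0, by simp, by simp⟩
  set d := f.natDegree
  refine ⟨∑ i ∈ range (d + 1), C (f.coeff i) * powerSumPoly i, ?_, fun n => ?_⟩
  · have hle : (∑ i ∈ range (d + 1), C (f.coeff i) * powerSumPoly i).natDegree ≤ d + 1 :=
      natDegree_sum_le_of_forall_le _ _ fun i hi =>
        (natDegree_C_mul_le _ _).trans <| (natDegree_powerSumPoly_le i).trans <| by
          simpa using mem_range.mp hi
    have htop : (∑ i ∈ range (d + 1), C (f.coeff i) * powerSumPoly i).coeff (d + 1) =
        f.leadingCoeff / (d + 1) := by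
      rw [finsetSum_coeff, sum_range_succ, sum_eq_zero fun i hi => ?_, zero_add, coeff_C_mul,
        coeff_powerSumPoly_succ, leadingCoeff, mul_one_div]
      rw [coeff_C_mul, coeff_eq_zero_of_natDegree_lt (p := powerSumPoly i), mul_zero]
      exact (natDegree_powerSumPoly_le i).trans_lt (by simpa using mem_range.mp hi)
    rw [degree_eq_natDegree hf, degree_eq_of_le_of_coeff_ne_zero (degree_le_of_natDegree_le hle)]
    · rfl
    · rw [htop]; exact div_ne_zero (leadingCoeff_ne_zero.mpr hf) (by positivity)
  · simp only [eval_finsetSum, eval_mul, eval_C, eval_powerSumPoly, mul_sum]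
    rw [sum_comm]
    exact sum_congr rfl fun m _ => (eval_eq_sum_range (m : ℚ)).symm

theorem exists_degree_eq_eval_eq_of_succ_eq_add_eval {u : ℕ → ℚ} {f : ℚ[X]} (hf : f ≠ 0)
    {a : ℕ} (hu : ∀ n ≥ a, u (n + 1) = u n + f.eval (n : ℚ)) :
    ∃ g : ℚ[X], g.degree = f.degree + 1 ∧ ∀ n ≥ a, u n = g.eval (n : ℚ) := by
  obtain ⟨g, hdeg, hg⟩ := exists_degree_eq_eval_eq_sum_range f
  have hpos : 0 < g.degree := by
    rw [hdeg, degree_eq_natDegree hf]; exact_mod_cast Nat.succ_pos _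
  refine ⟨g + C (u a - g.eval (a : ℚ)), by rw [degree_add_C hpos, hdeg], fun n hn => ?_⟩
  induction n, hn using Nat.le_induction with
  | base => simp
  | succ n hn ih =>
    rw [hu n hn, ih]
    simp only [eval_add, eval_C, hg, sum_range_succ]
    ring

theorem stirling2_eq_stirlingSecond : ∀ n k : ℕ, stirling2 n k = Nat.stirlingSecond n k
  | 0, 0 | 0, _ + 1 | _ + 1, 0 => rfl
  | n + 1, k + 1 => by
    rw [stirling2, Nat.stirlingSecond_succ_succ, stirling2_eq_stirlingSecond n k,
      stirling2_eq_stirlingSecond n (k + 1), add_comm]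

theorem stirlingSecond_succ_self_sub_succ {n k : ℕ} (h : k < n) :
    Nat.stirlingSecond (n + 1) (n + 1 - (k + 1)) =
      Nat.stirlingSecond n (n - (k + 1)) + (n - k) * Nat.stirlingSecond n (n - k) := by
  obtain ⟨j, rfl⟩ := Nat.exists_eq_add_of_lt h
  rw [show k + j + 1 + 1 - (k + 1) = j + 1 by omega, show k + j + 1 - (k + 1) = j by omega,
    show k + j + 1 - k = j + 1 by omega, Nat.stirlingSecond_succ_succ, add_comm]

theorem exists_degree_eq_stirlingSecond_self_sub_eq_eval (k : ℕ) :
    ∃ P : ℚ[X], P.degree = (2 * k : ℕ) ∧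
      ∀ n ≥ k, (Nat.stirlingSecond n (n - k) : ℚ) = P.eval (n : ℚ) := by
  induction k with
  | zero => exact ⟨1, by simp, fun n _ => by simp [Nat.stirlingSecond_self]⟩
  | succ k ih =>
    obtain ⟨P, hdeg, hP⟩ := ih
    have hP0 : P ≠ 0 := by rintro rfl; exact WithBot.bot_ne_coe hdeg
    have hstep : ∀ n ≥ k + 1, (Nat.stirlingSecond (n + 1) (n + 1 - (k + 1)) : ℚ) =
        Nat.stirlingSecond n (n - (k + 1)) + ((X - C (k : ℚ)) * P).eval (n : ℚ) := by
      intro n hn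
      rw [stirlingSecond_succ_self_sub_succ hn, eval_mul, eval_sub, eval_X, eval_C,
        ← hP n (by omega)]
      push_cast [Nat.cast_sub (by omega : k ≤ n)]
      ring
    obtain ⟨Q, hQ, hQeval⟩ := exists_degree_eq_eval_eq_of_succ_eq_add_eval
      (u := fun n => (Nat.stirlingSecond n (n - (k + 1)) : ℚ))
      (mul_ne_zero (X_sub_C_ne_zero _) hP0) hstep
    refine ⟨Q, ?_, hQeval⟩
    rw [hQ, degree_mul, degree_X_sub_C, hdeg]
    norm_cast
    omega

open Polynomial Real in
/-- The `r`-th right-down diagonal `d_n^{(r)} = F_{n-r+2}·S(n, n-r+1)` of the Fibonacci-Fubini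
triangle can be written as `p(n)·α^{n+2-r} + q(n)·β^{n+2-r}` where `p, q` are conjugate
polynomials (over `ℚ(√5)`, with `√5 ↦ -√5`) of degree `2r-2`. -/
theorem fibFubiniD_binet_form (r : ℕ) (hr : 1 ≤ r) :
    ∃ p q : Polynomial ℝ, ∃ A B : Polynomial ℚ,
      p = A.map (algebraMap ℚ ℝ) + Polynomial.C (Real.sqrt 5) * B.map (algebraMap ℚ ℝ) ∧
      q = A.map (algebraMap ℚ ℝ) - Polynomial.C (Real.sqrt 5) * B.map (algebraMap ℚ ℝ) ∧
      p.degree = (2 * r - 2 : ℕ) ∧ q.degree = (2 * r - 2 : ℕ) ∧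
      ∀ n : ℕ, r ≤ n →
        (Nat.fib (n - r + 2) * stirling2 n (n - r + 1) : ℝ) =
          p.eval (n : ℝ) * ((1 + Real.sqrt 5) / 2) ^ (n + 2 - r) +
            q.eval (n : ℝ) * ((1 - Real.sqrt 5) / 2) ^ (n + 2 - r) := by
  obtain ⟨P, hdeg, hP⟩ := exists_degree_eq_stirlingSecond_self_sub_eq_eval (r - 1)
  set B : ℚ[X] := C (1 / 5) * P
  have hs5 : √5 ≠ 0 := by positivity
  have hdegB : (C √5 * B.map (algebraMap ℚ ℝ)).degree = (2 * r - 2 : ℕ) := by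
    rw [degree_C_mul hs5, degree_map, degree_C_mul (by norm_num), hdeg]
    congr 1
    omega
  refine ⟨C √5 * B.map (algebraMap ℚ ℝ), -(C √5 * B.map (algebraMap ℚ ℝ)), 0, B,
    by simp, by simp, hdegB, by rw [degree_neg, hdegB], fun n hn => ?_⟩
  have hS : (stirling2 n (n - r + 1) : ℝ) = 5 * (B.map (algebraMap ℚ ℝ)).eval (n : ℝ) := by
    rw [eval_natCast_map, stirling2_eq_stirlingSecond, show n - r + 1 = n - (r - 1) by omega,
      ← Rat.cast_natCast, hP n (by omega)]
    simp [B]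
  rw [hS, show n + 2 - r = n - r + 2 by omega, Real.coe_fib_eq, eval_neg, eval_mul, eval_C]
  field_simp
  rw [Real.sq_sqrt (by norm_num)]
  ring
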